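/- In the free group G = ⟨a, b, c⟩ with the homomorphisms φ and ψ as given, the element a is not doubly twisted conjugate to a², since their images in the abelianization ℤ³ differ: twisted conjugacy classes in the abelianization are cosets of the image of (φ̄ − ψ̄), and (1,0,0) − (2,0,0) = (−1,0,0) is not in the image of φ̄ − ψ̄. -/
import Mathlib


/-- In the free group on a, b, c with the given φ, ψ, the element a is not
doubly twisted conjugate to a². -/
theorem not_twisted_conj_example
    (φ ψ : FreeGroup (Fin 3) →* FreeGroup (Fin 3))
    (a b c : FreeGroup (Fin 3))
    (ha : a = FreeGroup.of 0) (hb : b = FreeGroup.of 1) (hc : c = FreeGroup.of 2)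
    (hφa : φ a = a * c * b⁻¹) (hφb : φ b = a * b) (hφc : φ c = b)
    (hψa : ψ a = a⁻¹ * c * b⁻¹) (hψb : ψ b = c) (hψc : ψ c = b⁻¹ * a) :
    ¬ ∃ γ : FreeGroup (Fin 3), a = φ γ * a ^ 2 * (ψ γ)⁻¹ := by
  rintro ⟨γ, hγ⟩
  set f : Fin 3 → Multiplicative (ZMod 4) :=
    ![Multiplicative.ofAdd 2, Multiplicative.ofAdd 1, Multiplicative.ofAdd 3] with hf
  set h : FreeGroup (Fin 3) →* Multiplicative (ZMod 4) := FreeGroup.lift f with hh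
  have key : h.comp φ = h.comp ψ := by
    apply FreeGroup.ext_hom
    intro i
    fin_cases i
    · show h (φ (FreeGroup.of 0)) = h (ψ (FreeGroup.of 0))
      rw [← ha, hφa, hψa, ha, hb, hc]
      simp only [map_mul, map_inv, hh, FreeGroup.lift_apply_of, hf]
      decide
    · show h (φ (FreeGroup.of 1)) = h (ψ (FreeGroup.of 1))
      rw [← hb, hφb, hψb, ha, hb, hc]
      simp only [map_mul, map_inv, hh, FreeGroup.lift_apply_of, hf]
      decide
    · show h (φ (FreeGroup.of 2)) = h (ψ (FreeGroup.of 2))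
      rw [← hc, hφc, hψc, ha, hb]
      simp only [map_mul, map_inv, hh, FreeGroup.lift_apply_of, hf]
      decide
  have h2 : h (φ γ) = h (ψ γ) := by
    have := congrArg (fun g => g γ) key
    simpa using this
  have := congrArg h hγ
  rw [map_mul, map_mul, map_inv, map_pow, h2, ha] at this
  have hcontra : (Multiplicative.ofAdd (2 : ZMod 4)) =
      h (ψ γ) * (Multiplicative.ofAdd (2 : ZMod 4)) ^ 2 * (h (ψ γ))⁻¹ := by
    simpa [hh, hf] using this
  rw [mul_comm, ← mul_assoc, inv_mul_cancel, one_mul] at hcontra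
  revert hcontra
  decide
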